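/- For γ ∈ (0, 1/L_f), every element H of the approximate generalized Hessian ∂̂²F_γ(x) = { γ⁻¹(I - γ∇²f(x))(I - P(I - γ∇²f(x))) : P ∈ ∂_C(prox_{γg})(x - γ∇f(x)) } is symmetric positive semidefinite and satisfies ξ₁‖d‖² ≤ d'Hd ≤ ξ₂‖d‖² for all d, with ξ₁ = min{(1-γμ_f)μ_f, (1-γL_f)L_f} and ξ₂ = γ⁻¹(1-γμ_f). -/

import Mathlib

open scoped RealInnerProductSpace
open Filter Topology

noncomputable section

abbrev Eucl (n : ℕ) := EuclideanSpace ℝ (Fin n)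

/-- `p` is the proximal mapping of `g` with parameter `γ`:
`p x` minimizes `u ↦ g u + ‖u - x‖² / (2γ)`. -/
def IsProx {n : ℕ} (γ : ℝ) (g : Eucl n → EReal) (p : Eucl n → Eucl n) : Prop :=
  ∀ x u, g (p x) + ((‖p x - x‖ ^ 2 / (2 * γ) : ℝ) : EReal)
        ≤ g u + ((‖u - x‖ ^ 2 / (2 * γ) : ℝ) : EReal)

/-- `g` is proper, lower semicontinuous and convex (with values in `ℝ ∪ {+∞}`). -/
def ProperLscConvex {n : ℕ} (g : Eucl n → EReal) : Prop :=
  (∃ x, g x ≠ ⊤) ∧ (∀ x, g x ≠ ⊥) ∧ LowerSemicontinuous g ∧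
  (∀ x y : Eucl n, ∀ a b : ℝ, 0 ≤ a → 0 ≤ b → a + b = 1 →
    g (a • x + b • y) ≤ (a : EReal) * g x + (b : EReal) * g y)

/-- B-subdifferential (limiting Jacobian) of a mapping `T` at `x`: limits of Jacobians
along sequences of differentiability points converging to `x`. -/
def Bsubdiff {n : ℕ} (T : Eucl n → Eucl n) (x : Eucl n) : Set (Eucl n →L[ℝ] Eucl n) :=
  { H | ∃ u : ℕ → Eucl n, (∀ k, DifferentiableAt ℝ T (u k)) ∧
      Tendsto u atTop (𝓝 x) ∧ Tendsto (fun k => fderiv ℝ T (u k)) atTop (𝓝 H) }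

/-- Clarke generalized Jacobian: convex hull of the B-subdifferential. -/
def ClarkeJacobian {n : ℕ} (T : Eucl n → Eucl n) (x : Eucl n) : Set (Eucl n →L[ℝ] Eucl n) :=
  convexHull ℝ (Bsubdiff T x)

/-!
Write `A = 1 - γ∇²f(x)`, so that `⟪H d, d⟫ = γ⁻¹ (⟪A d, d⟫ - ⟪P (A d), A d⟫)`. At a point of
differentiability the Jacobian of `prox_{γg}` is symmetric, because `prox_{γg}` is the gradient of
`‖z‖² / 2 - γ` times the Moreau envelope, and it lies in the closed ball of radius `1/2` about
`I/2`, because `prox_{γg}` is firmly nonexpansive (`2 prox_{γg} - I` is `1`-Lipschitz). Both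
conditions are closed and convex, so they pass to the Clarke Jacobian and give
`0 ≤ ⟪P e, e⟫ ≤ ‖e‖²`. The upper bound follows at once; the lower one reduces to
`⟪B d, d⟫ - γ ‖B d‖² ≥ ξ₁ ‖d‖²` for `B = ∇²f(x)`, a consequence of
`‖B d‖² ≤ (μ + L) ⟪B d, d⟫ - μ L ‖d‖²`, which is Cauchy–Schwarz for the semi-inner product
`⟪(B - μ) ·, ·⟫`.
-/

section Operators

variable {E : Type*} [NormedAddCommGroup E] [InnerProductSpace ℝ E] {γ μ L : ℝ}
  {B P S : E →L[ℝ] E}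

theorem sq_inner_map_le_mul (hS : ∀ u v : E, ⟪S u, v⟫ = ⟪u, S v⟫)
    (hpos : ∀ d : E, 0 ≤ ⟪S d, d⟫) (x y : E) :
    ⟪S x, y⟫ ^ 2 ≤ ⟪S x, x⟫ * ⟪S y, y⟫ := by
  have hquad : ∀ t : ℝ, 0 ≤ ⟪S y, y⟫ * (t * t) + (-2 * ⟪S x, y⟫) * t + ⟪S x, x⟫ := by
    intro t
    have h := hpos (x - t • y)
    simp only [map_sub, map_smul, inner_sub_left, inner_sub_right, real_inner_smul_left,
      real_inner_smul_right, hS y x, real_inner_comm (S x) y] at h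
    linarith
  have := discrim_le_zero hquad
  rw [discrim] at this
  linarith

theorem norm_sq_map_le_of_inner_map_le (hS : ∀ u v : E, ⟪S u, v⟫ = ⟪u, S v⟫)
    (hpos : ∀ d : E, 0 ≤ ⟪S d, d⟫) {M : ℝ} (hM : ∀ d : E, ⟪S d, d⟫ ≤ M * ‖d‖ ^ 2) (d : E) :
    ‖S d‖ ^ 2 ≤ M * ⟪S d, d⟫ := by
  rcases eq_or_ne (S d) 0 with h0 | h0
  · simp [h0]
  have hnorm : 0 < ‖S d‖ ^ 2 := by positivity
  have hcs : (‖S d‖ ^ 2) ^ 2 ≤ ⟪S d, d⟫ * (M * ‖S d‖ ^ 2) := by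
    calc (‖S d‖ ^ 2) ^ 2 = ⟪S d, S d⟫ ^ 2 := by rw [real_inner_self_eq_norm_sq]
      _ ≤ ⟪S d, d⟫ * ⟪S (S d), S d⟫ := sq_inner_map_le_mul hS hpos d (S d)
      _ ≤ ⟪S d, d⟫ * (M * ‖S d‖ ^ 2) := mul_le_mul_of_nonneg_left (hM _) (hpos d)
  nlinarith

theorem norm_sq_map_le_of_bounds (hB : ∀ u v : E, ⟪B u, v⟫ = ⟪u, B v⟫)
    (hμ : ∀ d : E, μ * ‖d‖ ^ 2 ≤ ⟪B d, d⟫) (hL : ∀ d : E, ⟪B d, d⟫ ≤ L * ‖d‖ ^ 2)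
    (d : E) : ‖B d‖ ^ 2 ≤ (μ + L) * ⟪B d, d⟫ - μ * L * ‖d‖ ^ 2 := by
  set S := B - μ • (1 : E →L[ℝ] E)
  have hSapply : ∀ v, S v = B v - μ • v := fun v => rfl
  have hSinner : ∀ v, ⟪S v, v⟫ = ⟪B v, v⟫ - μ * ‖v‖ ^ 2 := fun v => by
    rw [hSapply, inner_sub_left, real_inner_smul_left, real_inner_self_eq_norm_sq]
  have hS : ∀ u v : E, ⟪S u, v⟫ = ⟪u, S v⟫ := fun u v => by
    simp only [hSapply, inner_sub_left, inner_sub_right, real_inner_smul_left,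
      real_inner_smul_right, hB u v]
  have key := norm_sq_map_le_of_inner_map_le hS (fun v => by linarith [hSinner v, hμ v])
    (M := L - μ) (fun v => by linarith [hSinner v, hL v]) d
  rw [hSinner, hSapply, norm_sub_sq_real, norm_smul, real_inner_smul_right, mul_pow,
    Real.norm_eq_abs, sq_abs] at key
  linarith

theorem min_mul_norm_sq_le_inner_sub (hB : ∀ u v : E, ⟪B u, v⟫ = ⟪u, B v⟫)
    (hμ : ∀ d : E, μ * ‖d‖ ^ 2 ≤ ⟪B d, d⟫) (hL : ∀ d : E, ⟪B d, d⟫ ≤ L * ‖d‖ ^ 2)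
    (hγ : 0 ≤ γ) (d : E) :
    min ((1 - γ * μ) * μ) ((1 - γ * L) * L) * ‖d‖ ^ 2 ≤ ⟪B d, d⟫ - γ * ‖B d‖ ^ 2 := by
  have hsq := mul_le_mul_of_nonneg_left (norm_sq_map_le_of_bounds hB hμ hL d) hγ
  have hmin_μ := mul_le_mul_of_nonneg_right (min_le_left ((1 - γ * μ) * μ) ((1 - γ * L) * L))
    (sq_nonneg ‖d‖)
  have hmin_L := mul_le_mul_of_nonneg_right (min_le_right ((1 - γ * μ) * μ) ((1 - γ * L) * L))
    (sq_nonneg ‖d‖)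
  -- by `hsq` the right side is at least `(1 - γ (μ + L)) ⟪B d, d⟫ + γ μ L ‖d‖²`, which is affine
  -- in `⟪B d, d⟫ ∈ [μ ‖d‖², L ‖d‖²]` and hence minimal at an endpoint
  rcases le_total 0 (1 - γ * (μ + L)) with hc | hc
  · nlinarith [mul_le_mul_of_nonneg_left (hμ d) hc]
  · nlinarith [mul_le_mul_of_nonpos_left (hL d) hc]

theorem inner_map_self_mem_Icc_of_mem_closedBall
    (hP : P ∈ Metric.closedBall ((2 : ℝ)⁻¹ • 1) 2⁻¹) (e : E) :
    ⟪P e, e⟫ ∈ Set.Icc 0 (‖e‖ ^ 2) := by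
  have hdev : |⟪(P - (2 : ℝ)⁻¹ • 1) e, e⟫| ≤ 2⁻¹ * ‖e‖ ^ 2 :=
    calc |⟪(P - (2 : ℝ)⁻¹ • 1) e, e⟫| ≤ ‖(P - (2 : ℝ)⁻¹ • 1) e‖ * ‖e‖ := abs_real_inner_le_norm _ _
      _ ≤ ‖P - (2 : ℝ)⁻¹ • 1‖ * ‖e‖ * ‖e‖ := by gcongr; exact (P - (2 : ℝ)⁻¹ • 1).le_opNorm e
      _ ≤ 2⁻¹ * ‖e‖ * ‖e‖ := by gcongr; rwa [← dist_eq_norm]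
      _ = 2⁻¹ * ‖e‖ ^ 2 := by ring
  rw [sub_apply, smul_apply, one_apply_eq_self, inner_sub_left, real_inner_smul_left,
    real_inner_self_eq_norm_sq, abs_le] at hdev
  constructor <;> linarith

/-- With `B = ∇²f(x)` and `P ∈ ∂_C(prox_{γg})(x - γ∇f(x))`, an element of the approximate
generalized Hessian. -/
def approxHessian (γ : ℝ) (B P : E →L[ℝ] E) : E →L[ℝ] E :=
  γ⁻¹ • ((1 - γ • B).comp (1 - P.comp (1 - γ • B)))

theorem inner_sub_smul_map_comm (hB : ∀ u v : E, ⟪B u, v⟫ = ⟪u, B v⟫) (u v : E) :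
    ⟪u - γ • B u, v⟫ = ⟪u, v - γ • B v⟫ := by
  simp only [inner_sub_left, inner_sub_right, real_inner_smul_left, real_inner_smul_right, hB u v]

theorem approxHessian_apply (d : E) :
    approxHessian γ B P d =
      γ⁻¹ • ((d - P (d - γ • B d)) - γ • B (d - P (d - γ • B d))) := by
  simp only [approxHessian, smul_apply, sub_apply, ContinuousLinearMap.comp_apply,
    one_apply_eq_self]

theorem inner_approxHessian_comm (hB : ∀ u v : E, ⟪B u, v⟫ = ⟪u, B v⟫)
    (hP : ∀ u v : E, ⟪P u, v⟫ = ⟪u, P v⟫) (u v : E) :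
    ⟪approxHessian γ B P u, v⟫ = ⟪u, approxHessian γ B P v⟫ := by
  rw [approxHessian_apply, approxHessian_apply, real_inner_smul_left, real_inner_smul_right,
    inner_sub_smul_map_comm hB (u - _), ← inner_sub_smul_map_comm hB u (v - _),
    inner_sub_left u, inner_sub_right (u - γ • B u) v, hP, inner_sub_smul_map_comm hB u v]

theorem inner_approxHessian_self (hB : ∀ u v : E, ⟪B u, v⟫ = ⟪u, B v⟫) (d : E) :
    ⟪approxHessian γ B P d, d⟫ =
      γ⁻¹ * (⟪d - γ • B d, d⟫ - ⟪P (d - γ • B d), d - γ • B d⟫) := by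
  rw [approxHessian_apply, real_inner_smul_left, inner_sub_smul_map_comm hB, inner_sub_left,
    real_inner_comm d]

theorem min_mul_norm_sq_le_inner_approxHessian (hγ : 0 < γ)
    (hB : ∀ u v : E, ⟪B u, v⟫ = ⟪u, B v⟫)
    (hμ : ∀ d : E, μ * ‖d‖ ^ 2 ≤ ⟪B d, d⟫) (hL : ∀ d : E, ⟪B d, d⟫ ≤ L * ‖d‖ ^ 2)
    (hP : ∀ e : E, ⟪P e, e⟫ ≤ ‖e‖ ^ 2) (d : E) :
    min ((1 - γ * μ) * μ) ((1 - γ * L) * L) * ‖d‖ ^ 2 ≤ ⟪approxHessian γ B P d, d⟫ := by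
  have hexpand : ⟪d - γ • B d, d⟫ - ‖d - γ • B d‖ ^ 2 = γ * (⟪B d, d⟫ - γ * ‖B d‖ ^ 2) := by
    rw [norm_sub_sq_real, inner_sub_left, real_inner_smul_left, real_inner_smul_right, norm_smul,
      real_inner_self_eq_norm_sq, mul_pow, Real.norm_eq_abs, sq_abs, real_inner_comm]
    ring
  calc min ((1 - γ * μ) * μ) ((1 - γ * L) * L) * ‖d‖ ^ 2
      ≤ ⟪B d, d⟫ - γ * ‖B d‖ ^ 2 := min_mul_norm_sq_le_inner_sub hB hμ hL hγ.le d
    _ = γ⁻¹ * (⟪d - γ • B d, d⟫ - ‖d - γ • B d‖ ^ 2) := by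
      rw [hexpand, inv_mul_cancel_left₀ hγ.ne']
    _ ≤ ⟪approxHessian γ B P d, d⟫ := by
      rw [inner_approxHessian_self hB]
      gcongr
      exact hP _

theorem inner_approxHessian_le (hγ : 0 < γ) (hB : ∀ u v : E, ⟪B u, v⟫ = ⟪u, B v⟫)
    (hμ : ∀ d : E, μ * ‖d‖ ^ 2 ≤ ⟪B d, d⟫) (hP : ∀ e : E, 0 ≤ ⟪P e, e⟫) (d : E) :
    ⟪approxHessian γ B P d, d⟫ ≤ γ⁻¹ * (1 - γ * μ) * ‖d‖ ^ 2 := by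
  rw [inner_approxHessian_self hB, mul_assoc]
  gcongr
  rw [inner_sub_left, real_inner_smul_left, real_inner_self_eq_norm_sq]
  nlinarith [hμ d, hP (d - γ • B d)]

end Operators

theorem hasFDerivAt_of_norm_sub_le_sq {E F : Type*} [NormedAddCommGroup E] [NormedSpace ℝ E]
    [NormedAddCommGroup F] [NormedSpace ℝ F] {f : E → F} {f' : E →L[ℝ] F} {x : E} {C : ℝ}
    (hf : ∀ y, ‖f y - f x - f' (y - x)‖ ≤ C * ‖y - x‖ ^ 2) : HasFDerivAt f f' x := by
  rw [hasFDerivAt_iff_isLittleO_nhds_zero]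
  refine (Asymptotics.IsBigO.of_bound C (.of_forall fun h => ?_)).trans_isLittleO
    (Asymptotics.isLittleO_norm_pow_id one_lt_two)
  simpa using hf (x + h)

theorem clarkeJacobian_subset {n : ℕ} {T : Eucl n → Eucl n} {S : Set (Eucl n →L[ℝ] Eucl n)}
    (hSc : IsClosed S) (hSconv : Convex ℝ S)
    (hT : ∀ u, DifferentiableAt ℝ T u → fderiv ℝ T u ∈ S) (x : Eucl n) :
    ClarkeJacobian T x ⊆ S :=
  convexHull_min (fun _ ⟨_, hdiff, _, hlim⟩ =>
    hSc.mem_of_tendsto hlim (.of_forall fun k => hT _ (hdiff k))) hSconv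

section Prox

variable {n : ℕ} {γ : ℝ} {g : Eucl n → EReal} {p : Eucl n → Eucl n}

theorem IsProx.apply_ne_top (hg : ProperLscConvex g) (hp : IsProx γ g p) (x : Eucl n) :
    g (p x) ≠ ⊤ := by
  obtain ⟨u, hu⟩ := hg.1
  intro htop
  have h := hp x u
  lift g u to ℝ using ⟨hu, hg.2.1 u⟩ with b
  rw [htop, EReal.top_add_coe, ← EReal.coe_add, top_le_iff] at h
  exact EReal.coe_ne_top _ h

/-- The optimality condition `(x - p x) / γ ∈ ∂g (p x)`. -/
theorem IsProx.inner_le (hγ : 0 < γ) (hg : ProperLscConvex g) (hp : IsProx γ g p) (x : Eucl n)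
    {u : Eucl n} (hu : g u ≠ ⊤) :
    ⟪x - p x, u - p x⟫ ≤ γ * ((g u).toReal - (g (p x)).toReal) := by
  have hpx := hp.apply_ne_top hg x
  lift g (p x) to ℝ using ⟨hpx, hg.2.1 (p x)⟩ with a ha
  lift g u to ℝ using ⟨hu, hg.2.1 u⟩ with b hb
  rw [EReal.toReal_coe, EReal.toReal_coe]
  -- minimality of `p x` against the points `p x + t • (u - p x)`, then `t → 0⁺`
  have hseg : ∀ t ∈ Set.Ioc (0 : ℝ) 1,
      ⟪x - p x, u - p x⟫ ≤ γ * (b - a) + t * (‖u - p x‖ ^ 2 / 2) := by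
    rintro t ⟨ht0, ht1⟩
    have hconv := hg.2.2.2 (p x) u (1 - t) t (by linarith) ht0.le (by ring)
    rw [← ha, ← hb, ← EReal.coe_mul, ← EReal.coe_mul, ← EReal.coe_add] at hconv
    have hmin := (hp x ((1 - t) • p x + t • u)).trans (add_le_add_left hconv _)
    rw [← ha, ← EReal.coe_add, ← EReal.coe_add, EReal.coe_le_coe_iff] at hmin
    have hcomb : (1 - t) • p x + t • u - x = (p x - x) + t • (u - p x) := by
      rw [sub_smul, one_smul, smul_sub]; abel
    rw [hcomb, norm_add_sq_real, inner_smul_right, norm_smul, mul_pow, Real.norm_eq_abs, sq_abs,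
      ← neg_sub x (p x), inner_neg_left] at hmin
    rw [norm_neg] at hmin
    field_simp at hmin
    refine le_of_mul_le_mul_left ?_ ht0
    linarith
  have hlim : Tendsto (fun t : ℝ => γ * (b - a) + t * (‖u - p x‖ ^ 2 / 2)) (𝓝[>] 0)
      (𝓝 (γ * (b - a))) := by
    refine (Continuous.tendsto' ?_ 0 _ (by simp)).mono_left nhdsWithin_le_nhds
    fun_prop
  exact ge_of_tendsto hlim (eventually_of_mem (Ioc_mem_nhdsGT one_pos) hseg)

theorem IsProx.norm_sub_sq_le_inner (hγ : 0 < γ) (hg : ProperLscConvex g) (hp : IsProx γ g p)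
    (x y : Eucl n) : ‖p x - p y‖ ^ 2 ≤ ⟪p x - p y, x - y⟫ := by
  have hx := hp.inner_le hγ hg x (hp.apply_ne_top hg y)
  have hy := hp.inner_le hγ hg y (hp.apply_ne_top hg x)
  have hsum : ⟪x - p x, p y - p x⟫ + ⟪y - p y, p x - p y⟫ =
      ‖p x - p y‖ ^ 2 - ⟪p x - p y, x - y⟫ := by
    rw [← real_inner_self_eq_norm_sq]
    simp only [inner_sub_left, inner_sub_right, real_inner_comm]
    ring
  linarith

theorem IsProx.lipschitzWith_two_smul_sub (hγ : 0 < γ) (hg : ProperLscConvex g)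
    (hp : IsProx γ g p) : LipschitzWith 1 (fun x => (2 : ℝ) • p x - x) := by
  refine LipschitzWith.of_dist_le_mul fun x y => ?_
  rw [NNReal.coe_one, one_mul, dist_eq_norm, dist_eq_norm]
  have hrefl : (2 : ℝ) • p x - x - ((2 : ℝ) • p y - y) = (2 : ℝ) • (p x - p y) - (x - y) := by
    rw [smul_sub]; abel
  refine (pow_le_pow_iff_left₀ (norm_nonneg _) (norm_nonneg _) two_ne_zero).mp ?_
  rw [hrefl, norm_sub_sq_real, norm_smul, real_inner_smul_left, mul_pow, Real.norm_two]
  nlinarith [hp.norm_sub_sq_le_inner hγ hg x y]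

/-- `‖z‖² / 2 - γ e(z)` with `e` the Moreau envelope of `g`; its gradient is `p`. -/
def proxPotential (γ : ℝ) (g : Eucl n → EReal) (p : Eucl n → Eucl n) (z : Eucl n) : ℝ :=
  ⟪p z, z⟫ - ‖p z‖ ^ 2 / 2 - γ * (g (p z)).toReal

theorem IsProx.abs_proxPotential_sub_le (hγ : 0 < γ) (hg : ProperLscConvex g)
    (hp : IsProx γ g p) (y z : Eucl n) :
    |proxPotential γ g p z - proxPotential γ g p y - ⟪p y, z - y⟫| ≤ ‖z - y‖ ^ 2 / 2 := by
  have hz := hp.inner_le hγ hg z (hp.apply_ne_top hg y)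
  have hy := hp.inner_le hγ hg y (hp.apply_ne_top hg z)
  have h₁ := real_inner_self_nonneg (x := p z - p y)
  have h₂ := real_inner_self_nonneg (x := p z - p y - (z - y))
  unfold proxPotential
  rw [← real_inner_self_eq_norm_sq, ← real_inner_self_eq_norm_sq, ← real_inner_self_eq_norm_sq]
  simp only [inner_sub_left, inner_sub_right, real_inner_comm] at *
  rw [abs_le]
  constructor <;> linarith

theorem IsProx.hasFDerivAt_proxPotential (hγ : 0 < γ) (hg : ProperLscConvex g)
    (hp : IsProx γ g p) (y : Eucl n) :
    HasFDerivAt (proxPotential γ g p) (innerSL ℝ (p y)) y :=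
  hasFDerivAt_of_norm_sub_le_sq (C := 2⁻¹) fun z => by
    simpa [div_eq_inv_mul] using hp.abs_proxPotential_sub_le hγ hg y z

theorem IsProx.isSelfAdjoint_fderiv (hγ : 0 < γ) (hg : ProperLscConvex g) (hp : IsProx γ g p)
    {u : Eucl n} (hd : DifferentiableAt ℝ p u) : IsSelfAdjoint (fderiv ℝ p u) := by
  rw [ContinuousLinearMap.isSelfAdjoint_iff_isSymmetric]
  intro a b
  have hsymm : ⟪fderiv ℝ p u b, a⟫ = ⟪fderiv ℝ p u a, b⟫ :=
    second_derivative_symmetric (hp.hasFDerivAt_proxPotential hγ hg)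
      ((innerSL ℝ).hasFDerivAt.comp u hd.hasFDerivAt) b a
  rw [ContinuousLinearMap.coe_coe, ← hsymm, real_inner_comm]

theorem IsProx.fderiv_mem_closedBall (hγ : 0 < γ) (hg : ProperLscConvex g) (hp : IsProx γ g p)
    {u : Eucl n} (hd : DifferentiableAt ℝ p u) :
    fderiv ℝ p u ∈ Metric.closedBall ((2 : ℝ)⁻¹ • 1) 2⁻¹ := by
  have hderiv : HasFDerivAt (fun x => (2 : ℝ) • p x - x) ((2 : ℝ) • fderiv ℝ p u - 1) u :=
    (hd.hasFDerivAt.const_smul (2 : ℝ)).sub (hasFDerivAt_id u)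
  have hnorm := norm_fderiv_le_of_lipschitz ℝ (x₀ := u) (hp.lipschitzWith_two_smul_sub hγ hg)
  rw [hderiv.fderiv, NNReal.coe_one] at hnorm
  rw [show (2 : ℝ) • fderiv ℝ p u - 1 = (2 : ℝ) • (fderiv ℝ p u - (2 : ℝ)⁻¹ • 1) by
    rw [smul_sub, smul_smul, mul_inv_cancel₀ two_ne_zero, one_smul], norm_smul,
    Real.norm_two] at hnorm
  rw [Metric.mem_closedBall, dist_eq_norm]
  linarith

theorem IsProx.clarkeJacobian_subset (hγ : 0 < γ) (hg : ProperLscConvex g) (hp : IsProx γ g p)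
    (x : Eucl n) :
    ClarkeJacobian p x ⊆ {P | IsSelfAdjoint P} ∩ Metric.closedBall ((2 : ℝ)⁻¹ • 1) 2⁻¹ := by
  have hclosed : IsClosed {P : Eucl n →L[ℝ] Eucl n | IsSelfAdjoint P} :=
    isClosed_eq ContinuousLinearMap.adjoint.continuous continuous_id
  have hconvex : Convex ℝ {P : Eucl n →L[ℝ] Eucl n | IsSelfAdjoint P} :=
    (selfAdjoint.submodule ℝ (Eucl n →L[ℝ] Eucl n)).convex
  exact _root_.clarkeJacobian_subset (hclosed.inter Metric.isClosed_closedBall)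
    (hconvex.inter (convex_closedBall _ _))
    (fun _ hd => ⟨hp.isSelfAdjoint_fderiv hγ hg hd, hp.fderiv_mem_closedBall hγ hg hd⟩) x

end Prox

theorem approx_hessian_bounds_general {n : ℕ} (f' : Eucl n → Eucl n)
    (f'' : Eucl n → Eucl n →L[ℝ] Eucl n)
    (g : Eucl n → EReal) (γ μ L : ℝ) (p : Eucl n → Eucl n)
    (hsymm : ∀ x, ∀ u v : Eucl n, ⟪f'' x u, v⟫ = ⟪u, f'' x v⟫)
    (hμ : ∀ x, ∀ d : Eucl n, μ * ‖d‖ ^ 2 ≤ ⟪f'' x d, d⟫)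
    (hL : ∀ x, ∀ d : Eucl n, ⟪f'' x d, d⟫ ≤ L * ‖d‖ ^ 2)
    (hg : ProperLscConvex g)
    (hγ : 0 < γ)
    (hp : IsProx γ g p)
    (x : Eucl n) :
    ∀ P ∈ ClarkeJacobian p (x - γ • f' x),
      ∀ H : Eucl n →L[ℝ] Eucl n,
        H = γ⁻¹ • ((1 - γ • f'' x).comp (1 - P.comp (1 - γ • f'' x))) →
        (∀ u v : Eucl n, ⟪H u, v⟫ = ⟪u, H v⟫) ∧
        (∀ d : Eucl n,
          min ((1 - γ * μ) * μ) ((1 - γ * L) * L) * ‖d‖ ^ 2 ≤ ⟪H d, d⟫ ∧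
          ⟪H d, d⟫ ≤ γ⁻¹ * (1 - γ * μ) * ‖d‖ ^ 2) := by
  intro P hP H hH
  subst hH
  obtain ⟨hPsa, hPball⟩ := hp.clarkeJacobian_subset hγ hg _ hP
  have hPsymm : ∀ u v : Eucl n, ⟪P u, v⟫ = ⟪u, P v⟫ :=
    ContinuousLinearMap.isSelfAdjoint_iff_isSymmetric.mp hPsa
  have hPquad := inner_map_self_mem_Icc_of_mem_closedBall hPball
  exact ⟨inner_approxHessian_comm (hsymm x) hPsymm, fun d =>
    ⟨min_mul_norm_sq_le_inner_approxHessian hγ (hsymm x) (hμ x) (hL x) (fun e => (hPquad e).2) d,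
      inner_approxHessian_le hγ (hsymm x) (hμ x) (fun e => (hPquad e).1) d⟩⟩

/-- For `γ ∈ (0, 1/L_f)`, every element
`H = γ⁻¹(I - γ∇²f(x))(I - P(I - γ∇²f(x)))` with `P ∈ ∂_C(prox_{γg})(x - γ∇f(x))`
of the approximate generalized Hessian is symmetric psd and satisfies
`ξ₁‖d‖² ≤ ⟪Hd, d⟫ ≤ ξ₂‖d‖²` with `ξ₁ = min{(1-γμ)μ, (1-γL)L}`, `ξ₂ = γ⁻¹(1-γμ)`. -/
theorem approx_hessian_bounds {n : ℕ} (f : Eucl n → ℝ) (f' : Eucl n → Eucl n)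
    (f'' : Eucl n → Eucl n →L[ℝ] Eucl n)
    (g : Eucl n → EReal) (γ μ L : ℝ) (p : Eucl n → Eucl n)
    (hf2 : ContDiff ℝ 2 f)
    (hf' : ∀ x, HasGradientAt f (f' x) x)
    (hf'' : ∀ x, HasFDerivAt f' (f'' x) x)
    (hsymm : ∀ x, ∀ u v : Eucl n, ⟪f'' x u, v⟫ = ⟪u, f'' x v⟫)
    (hμ0 : 0 ≤ μ)
    (hμ : ∀ x, ∀ d : Eucl n, μ * ‖d‖ ^ 2 ≤ ⟪f'' x d, d⟫)
    (hL : ∀ x, ∀ d : Eucl n, ⟪f'' x d, d⟫ ≤ L * ‖d‖ ^ 2)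
    (hg : ProperLscConvex g)
    (hγ : 0 < γ) (hγL : γ < 1 / L)
    (hp : IsProx γ g p)
    (x : Eucl n) :
    ∀ P ∈ ClarkeJacobian p (x - γ • f' x),
      ∀ H : Eucl n →L[ℝ] Eucl n,
        H = γ⁻¹ • ((1 - γ • f'' x).comp (1 - P.comp (1 - γ • f'' x))) →
        (∀ u v : Eucl n, ⟪H u, v⟫ = ⟪u, H v⟫) ∧
        (∀ d : Eucl n,
          min ((1 - γ * μ) * μ) ((1 - γ * L) * L) * ‖d‖ ^ 2 ≤ ⟪H d, d⟫ ∧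
          ⟪H d, d⟫ ≤ γ⁻¹ * (1 - γ * μ) * ‖d‖ ^ 2) :=
  approx_hessian_bounds_general f' f'' g γ μ L p hsymm hμ hL hg hγ hp x
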